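/- For n = 5 or n ≥ 7, and any integer k with 2 ≤ k ≤ n−2 and gcd(k,n) = 1, the commutator subgroup B_n' of the braid group B_n is generated by the two elements α^k σ_1^{−k(n−1)} and σ_1 σ_{1+k}^{−1}, where α = σ_1⋯σ_{n−1}. -/

import Mathlib

/-!
Write `t = σ₁`, `q = αᵏ`, `u = q t^(-k(n-1))`, `v = t (q t q⁻¹)⁻¹ = σ₁ σ_{1+k}⁻¹` and `H = ⟨u, v⟩`.
Since `σ₁` commutes with `σ_{1+k} = q t q⁻¹`, conjugation by `t` preserves `H`
(`t u t⁻¹ = v u`, `t v t⁻¹ = v`), hence so does conjugation by `q = u t^(k(n-1))`. Conjugating `v`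
by powers of `q` and telescoping puts `σ₁ σ_{1+sk}⁻¹` in `H` for every `s ∈ ℤ`. As `αⁿ` commutes
with `σ₁`, the index of `σ_j = α^(j-1) σ₁ α^(1-j)` only matters modulo `n`, and `k` is invertible
modulo `n`, so `σ₁ σᵢ⁻¹ ∈ H` for every `i`. A subgroup normalized by `σ₁` that contains every
`σ₁ σᵢ⁻¹` contains the kernel of the exponent-sum map `B_n → ℤ`; applied to `B_n'` this identifies
that kernel with `B_n'`, and `u`, `v` have exponent sum zero.
-/

/-- Artin braid relators for the braid group on `n` strands, with generators
`FreeGroup.of i` corresponding to `σ_{i+1}` for `i : Fin (n-1)`. -/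
def braidRels (n : ℕ) : Set (FreeGroup (Fin (n - 1))) :=
  {r | ∃ i j : Fin (n - 1),
      ((j : ℕ) ≥ (i : ℕ) + 2 ∧
        r = FreeGroup.of i * FreeGroup.of j * (FreeGroup.of i)⁻¹ * (FreeGroup.of j)⁻¹) ∨
      ((j : ℕ) = (i : ℕ) + 1 ∧
        r = FreeGroup.of i * FreeGroup.of j * FreeGroup.of i *
          (FreeGroup.of j * FreeGroup.of i * FreeGroup.of j)⁻¹)}

/-- The braid group on `n` strands. -/
def BraidGroup (n : ℕ) : Type := PresentedGroup (braidRels n)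

instance (n : ℕ) : Group (BraidGroup n) :=
  inferInstanceAs (Group (PresentedGroup (braidRels n)))

/-- The Artin generator `σ_i` of `BraidGroup n`, for `1 ≤ i ≤ n-1` (junk value `1` otherwise). -/
def σ {n : ℕ} (i : ℕ) : BraidGroup n :=
  if h : 1 ≤ i ∧ i < n then PresentedGroup.of (⟨i - 1, by omega⟩ : Fin (n - 1)) else 1

/-- The element `α = σ_1 σ_2 ⋯ σ_{n-1}`. -/
def α (n : ℕ) : BraidGroup n := ((List.range (n - 1)).map (fun i => σ (i + 1))).prod

/-- The half-twist `σ_j` for an index `j` taken modulo `n`, defined by conjugating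
`σ_1` by the rotation `α`: `σ_{1+m} = α^m σ_1 α^{-m}`. -/
def σm {n : ℕ} (j : ℤ) : BraidGroup n := (α n) ^ (j - 1) * σ 1 * (α n) ^ (1 - j)

namespace Subgroup

variable {G : Type*} [Group G]

theorem mem_normalizer_closure_of_conj_mem {s : Set G} {g : G}
    (h₁ : ∀ x ∈ s, g * x * g⁻¹ ∈ closure s) (h₂ : ∀ x ∈ s, g⁻¹ * x * g ∈ closure s) :
    g ∈ normalizer (closure s : Set G) := by
  have conj_le (c : G) (hc : ∀ x ∈ s, c * x * c⁻¹ ∈ closure s) :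
      closure s ≤ (closure s).comap (MulAut.conj c).toMonoidHom :=
    (closure_le _).2 hc
  refine mem_normalizer_iff.2 fun h => ⟨fun hh => conj_le g h₁ hh, fun hh => ?_⟩
  simpa [mul_assoc] using conj_le g⁻¹ (by simpa using h₂) hh

theorem mem_normalizer_closure_pair_of_commute {q t : G} (h : Commute t (q * t * q⁻¹))
    (m : ℕ) :
    t ∈ normalizer (closure {q * (t ^ m)⁻¹, t * (q * t * q⁻¹)⁻¹} : Set G) ∧
      q ∈ normalizer (closure {q * (t ^ m)⁻¹, t * (q * t * q⁻¹)⁻¹} : Set G) := by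
  set u := q * (t ^ m)⁻¹
  set v := t * (q * t * q⁻¹)⁻¹
  have hu : u ∈ closure {u, v} := subset_closure (by simp)
  have hv : v ∈ closure {u, v} := subset_closure (by simp)
  have htv : Commute t v := (Commute.refl t).mul_right h.inv_right
  have ht : t ∈ normalizer (closure {u, v} : Set G) := by
    refine mem_normalizer_closure_of_conj_mem ?_ ?_ <;> rintro _ (rfl | rfl)
    · have : t * u * t⁻¹ = v * u := by simp only [u, v]; group
      exact this ▸ mul_mem hv hu
    · rwa [htv.mul_inv_cancel]
    · have : t⁻¹ * u * t = v⁻¹ * u :=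
        calc t⁻¹ * u * t = t⁻¹ * (q * t * q⁻¹) * u := by simp only [u]; group
          _ = (q * t * q⁻¹) * t⁻¹ * u := by rw [h.inv_left.eq]
          _ = v⁻¹ * u := by simp only [v]; group
      exact this ▸ mul_mem (inv_mem hv) hu
    · rwa [htv.inv_mul_cancel]
  refine ⟨ht, ?_⟩
  have : q = u * t ^ m := by simp only [u]; group
  exact this ▸ mul_mem (le_normalizer hu) (pow_mem ht m)

theorem mul_inv_conj_zpow_mem {H : Subgroup G} {q t : G} (hq : q ∈ normalizer (H : Set G))
    (ht : t * (q * t * q⁻¹)⁻¹ ∈ H) (s : ℤ) : t * (q ^ s * t * (q ^ s)⁻¹)⁻¹ ∈ H := by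
  induction s using Int.induction_on with
  | zero => simp
  | succ s ih =>
    have := mul_mem ih ((mem_normalizer_iff.1 (zpow_mem hq s) _).1 ht)
    convert this using 1
    group
  | pred s ih =>
    have := mul_mem ih (inv_mem ((mem_normalizer_iff.1 (zpow_mem hq (-s - 1)) _).1 ht))
    convert this using 1
    group

end Subgroup

namespace MonoidHom

open Subgroup

theorem ker_le_of_forall_mul_inv_mem {G ι : Type*} [Group G]
    (e : G →* Multiplicative ℤ) {t : G} (het : e t = Multiplicative.ofAdd 1) {H : Subgroup G}
    (htH : t ∈ normalizer (H : Set G)) {x : ι → G} (hx : closure (Set.range x) = ⊤)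
    (hxe : ∀ i, e (x i) = e t) (hxH : ∀ i, t * (x i)⁻¹ ∈ H) : e.ker ≤ H := by
  have conj_mem (a : ℤ) {h : G} (hh : h ∈ H) : t ^ a * h * (t ^ a)⁻¹ ∈ H :=
    (mem_normalizer_iff.1 (zpow_mem htH a) h).1 hh
  have key (g : G) : g * (t ^ (e g).toAdd)⁻¹ ∈ H := by
    have hg : g ∈ closure (Set.range x) := hx ▸ mem_top g
    induction hg using closure_induction with
    | mem _ hg =>
      obtain ⟨i, rfl⟩ := hg
      simpa [hxe, het] using inv_mem (hxH i)
    | one => simp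
    | mul g h _ _ hg hh =>
      convert mul_mem hg (conj_mem (e g).toAdd hh) using 1
      rw [map_mul, toAdd_mul]
      group
    | inv g _ hg =>
      convert conj_mem (-(e g).toAdd) (inv_mem hg) using 1
      rw [map_inv, toAdd_inv]
      group
  intro g hg
  simpa [mem_ker.1 hg] using key g

end MonoidHom

namespace BraidGroup

open Subgroup

variable {n : ℕ}

theorem σ_eq_of {i : ℕ} (h₁ : 1 ≤ i) (h₂ : i < n) :
    (σ i : BraidGroup n) = PresentedGroup.of ⟨i - 1, by omega⟩ :=
  dif_pos ⟨h₁, h₂⟩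

theorem of_eq_σ (j : Fin (n - 1)) : (PresentedGroup.of j : BraidGroup n) = σ (j + 1) := by
  rw [σ_eq_of (by omega) (by omega)]
  simp

theorem commute_σ {i j : ℕ} (hi : 1 ≤ i) (hij : i + 2 ≤ j) (hj : j < n) :
    Commute (σ i : BraidGroup n) (σ j) := by
  rw [σ_eq_of hi (by omega), σ_eq_of (by omega) hj]
  exact PresentedGroup.mk_eq_mk_of_mul_inv_mem
    ⟨⟨i - 1, by omega⟩, ⟨j - 1, by omega⟩, .inl ⟨by simp; omega, by group⟩⟩

theorem σ_braid {i : ℕ} (hi : 1 ≤ i) (hin : i + 1 < n) :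
    (σ i : BraidGroup n) * σ (i + 1) * σ i = σ (i + 1) * σ i * σ (i + 1) := by
  rw [σ_eq_of hi (by omega), σ_eq_of (by omega) hin]
  exact PresentedGroup.mk_eq_mk_of_mul_inv_mem
    ⟨⟨i - 1, by omega⟩, ⟨i + 1 - 1, by omega⟩, .inr ⟨by simp; omega, rfl⟩⟩

theorem α_eq_prod_range' : α n = ((List.range' 1 (n - 1)).map σ).prod := by
  rw [α, List.range'_eq_map_range, List.map_map]
  congr 2
  ext i
  simp [Nat.add_comm]

theorem α_mul_σ {i : ℕ} (hi : 1 ≤ i) (hin : i + 1 < n) :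
    α n * σ i = σ (i + 1) * α n := by
  set A : BraidGroup n := ((List.range' 1 (i - 1)).map σ).prod
  set B : BraidGroup n := ((List.range' (i + 2) (n - 2 - i)).map σ).prod
  have hα : α n = A * (σ i * σ (i + 1)) * B := by
    rw [α_eq_prod_range', show n - 1 = (i - 1) + (2 + (n - 2 - i)) by omega,
      ← List.range'_append_1, ← List.range'_append_1]
    simp only [List.map_append, List.prod_append, A, B, show 1 + (i - 1) = i by omega,
      show i + 2 = i + 1 + 1 by omega]
    simp [List.range'_succ, mul_assoc]
  have hA : Commute (σ (i + 1)) A := Commute.list_prod_right _ _ fun x hx => by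
    obtain ⟨j, hj, rfl⟩ := List.mem_map.1 hx
    rw [List.mem_range'_1] at hj
    exact (commute_σ hj.1 (by omega) hin).symm
  have hB : Commute (σ i) B := Commute.list_prod_right _ _ fun x hx => by
    obtain ⟨j, hj, rfl⟩ := List.mem_map.1 hx
    rw [List.mem_range'_1] at hj
    exact commute_σ hi (by omega) (by omega)
  calc α n * σ i = A * (σ i * σ (i + 1) * σ i) * B := by
        rw [hα, mul_assoc _ B, hB.symm.eq]; group
    _ = A * σ (i + 1) * (σ i * σ (i + 1)) * B := by rw [σ_braid hi hin]; group
    _ = σ (i + 1) * (A * (σ i * σ (i + 1)) * B) := by rw [← hA.eq]; group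
    _ = σ (i + 1) * α n := by rw [hα]

theorem α_mul_prod_σ_range' {a l : ℕ} (ha : 1 ≤ a) (hl : a + l < n) :
    α n * ((List.range' a l).map σ).prod = ((List.range' (a + 1) l).map σ).prod * α n := by
  rw [← mul_inv_eq_iff_eq_mul, ← MulAut.conj_apply, map_list_prod, List.map_map,
    List.range'_succ_left, List.map_map]
  congr 1
  refine List.map_congr_left fun j hj => ?_
  rw [List.mem_range'_1] at hj
  rw [Function.comp_apply, Function.comp_apply, MulAut.conj_apply,
    α_mul_σ (by omega) (by omega), mul_inv_cancel_right]

theorem α_pow_mul_σ_one {j : ℕ} (hj : j + 1 < n) : α n ^ j * σ 1 = σ (j + 1) * α n ^ j := by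
  induction j with
  | zero => simp
  | succ j ih =>
    rw [pow_succ', mul_assoc, ih (by omega), ← mul_assoc, α_mul_σ (by omega) hj, mul_assoc]

theorem α_sq_mul_σ_sub_one (hn : 3 ≤ n) : α n ^ 2 * σ (n - 1) = σ 1 * α n ^ 2 := by
  set A₁ : BraidGroup n := ((List.range' 1 (n - 2)).map σ).prod
  set A₂ : BraidGroup n := ((List.range' 2 (n - 2)).map σ).prod
  have hα₁ : α n = σ 1 * A₂ := by
    rw [α_eq_prod_range', show n - 1 = n - 2 + 1 by omega, List.range'_succ]; simp [A₂]
  have hα₂ : α n = A₁ * σ (n - 1) := by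
    rw [α_eq_prod_range', show n - 1 = n - 2 + 1 by omega, List.range'_1_concat]
    simp [A₁, show 1 + (n - 2) = n - 2 + 1 by omega]
  calc α n ^ 2 * σ (n - 1) = σ 1 * A₂ * α n * σ (n - 1) := by rw [← hα₁, sq]
    _ = σ 1 * (α n * (A₁ * σ (n - 1))) := by
      rw [mul_assoc (σ 1), ← α_mul_prod_σ_range' le_rfl (by omega)]
      simp only [A₁, mul_assoc]
    _ = σ 1 * α n ^ 2 := by rw [← hα₂, sq]

theorem commute_α_pow_σ_one (hn : 3 ≤ n) : Commute (α n ^ n) (σ 1) := by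
  have hshift : α n ^ (n - 2) * σ 1 = σ (n - 1) * α n ^ (n - 2) := by
    rw [α_pow_mul_σ_one (by omega), show n - 2 + 1 = n - 1 by omega]
  have hsplit : α n ^ n = α n ^ 2 * α n ^ (n - 2) := by rw [← pow_add]; congr 1; omega
  calc α n ^ n * σ 1 = α n ^ 2 * σ (n - 1) * α n ^ (n - 2) := by
        rw [hsplit, mul_assoc, hshift, ← mul_assoc]
    _ = σ 1 * α n ^ n := by rw [α_sq_mul_σ_sub_one hn, hsplit, mul_assoc]

theorem σm_one_add (d : ℤ) : (σm (1 + d) : BraidGroup n) = α n ^ d * σ 1 * (α n ^ d)⁻¹ := by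
  simp only [σm, add_sub_cancel_left, sub_add_cancel_left, zpow_neg]

theorem σm_natCast {i : ℕ} (h₁ : 1 ≤ i) (h₂ : i < n) : (σm i : BraidGroup n) = σ i := by
  obtain ⟨j, rfl⟩ : ∃ j, i = j + 1 := ⟨i - 1, by omega⟩
  rw [Nat.cast_succ, add_comm, σm_one_add, zpow_natCast, α_pow_mul_σ_one h₂,
    mul_inv_cancel_right]

theorem σm_add_mul (hn : 3 ≤ n) (j c : ℤ) : (σm (j + c * n) : BraidGroup n) = σm j := by
  have hc : Commute (α n ^ (c * n)) (σ 1) := by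
    rw [mul_comm, zpow_mul, zpow_natCast]
    exact (commute_α_pow_σ_one hn).zpow_left c
  calc (σm (j + c * n) : BraidGroup n)
      = α n ^ (j - 1) * (α n ^ (c * n) * σ 1 * (α n ^ (c * n))⁻¹) * α n ^ (1 - j) := by
        simp only [σm]; group
    _ = σm j := by rw [hc.mul_inv_cancel]; rfl

theorem exists_zpow_conj_σ_one_eq_σ (hn : 3 ≤ n) {k : ℕ} (hk : Nat.gcd k n = 1) {i : ℕ}
    (h₁ : 1 ≤ i) (h₂ : i < n) :
    ∃ s : ℤ, (α n ^ k) ^ s * σ 1 * ((α n ^ k) ^ s)⁻¹ = σ i := by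
  have hab := Nat.gcd_eq_gcd_ab k n
  rw [hk, Nat.cast_one] at hab
  refine ⟨((i : ℤ) - 1) * k.gcdA n, ?_⟩
  rw [← zpow_natCast, ← zpow_mul, ← σm_one_add, ← σm_natCast h₁ h₂,
    ← σm_add_mul hn _ (((i : ℤ) - 1) * k.gcdB n)]
  congr 1
  linear_combination (1 - (i : ℤ)) * hab

def expSum (n : ℕ) : BraidGroup n →* Multiplicative ℤ :=
  PresentedGroup.toGroup (f := fun _ => Multiplicative.ofAdd 1) <| by
    rintro r ⟨i, j, ⟨-, rfl⟩ | ⟨-, rfl⟩⟩ <;> simp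

theorem expSum_σ {i : ℕ} (h₁ : 1 ≤ i) (h₂ : i < n) :
    expSum n (σ i) = Multiplicative.ofAdd 1 := by
  rw [σ_eq_of h₁ h₂]
  exact PresentedGroup.toGroup.of _

theorem expSum_α : expSum n (α n) = Multiplicative.ofAdd 1 ^ (n - 1) := by
  rw [α_eq_prod_range', map_list_prod, List.map_map,
    List.map_congr_left (f := expSum n ∘ σ) (g := fun _ => Multiplicative.ofAdd 1) fun i hi =>
      expSum_σ (List.mem_range'_1.1 hi).1 (by have := List.mem_range'_1.1 hi; omega)]
  simp

theorem ker_expSum_le (hn : 2 ≤ n) {H : Subgroup (BraidGroup n)}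
    (hH : σ 1 ∈ normalizer (H : Set (BraidGroup n)))
    (hσ : ∀ i, 1 ≤ i → i < n → σ 1 * (σ i)⁻¹ ∈ H) : (expSum n).ker ≤ H :=
  (expSum n).ker_le_of_forall_mul_inv_mem (expSum_σ le_rfl hn) hH
    (PresentedGroup.closure_range_of _)
    (fun j => by rw [of_eq_σ, expSum_σ (by omega) (by omega), expSum_σ le_rfl hn])
    (fun j => by rw [of_eq_σ]; exact hσ _ (by omega) (by omega))

open scoped commutatorElement in
theorem ker_expSum (hn : 2 ≤ n) : (expSum n).ker = commutator (BraidGroup n) := by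
  refine le_antisymm (ker_expSum_le hn (by simp [normalizer_eq_top]) fun i h₁ h₂ => ?_)
    (Abelianization.commutator_subset_ker _)
  have : σ 1 * (σm (i : ℤ))⁻¹ = ⁅(σ 1 : BraidGroup n), α n ^ ((i : ℤ) - 1)⁆ := by
    simp only [σm, commutatorElement_def]; group
  rw [← σm_natCast h₁ h₂, this]
  exact Subgroup.commutator_mem_commutator (mem_top _) (mem_top _)

end BraidGroup

open BraidGroup in
theorem commutator_two_generators_general (n : ℕ) (k : ℕ)
    (hk1 : 2 ≤ k) (hk2 : k ≤ n - 2) (hg : Nat.gcd k n = 1) :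
    Subgroup.closure ({(α n) ^ k * ((σ 1 : BraidGroup n) ^ (k * (n - 1)))⁻¹,
        σ 1 * (σ (1 + k))⁻¹} : Set (BraidGroup n)) = commutator (BraidGroup n) := by
  have hconj : α n ^ k * σ 1 * (α n ^ k)⁻¹ = (σ (1 + k) : BraidGroup n) := by
    rw [← zpow_natCast, ← σm_one_add, ← Nat.cast_one, ← Nat.cast_add,
      σm_natCast (by omega) (by omega)]
  have hcomm : Commute (σ 1) (α n ^ k * σ 1 * (α n ^ k)⁻¹ : BraidGroup n) :=
    hconj ▸ commute_σ le_rfl (by omega) (by omega)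
  obtain ⟨hσ, hα⟩ := Subgroup.mem_normalizer_closure_pair_of_commute hcomm (k * (n - 1))
  rw [← hconj, ← ker_expSum (by omega)]
  refine le_antisymm ((Subgroup.closure_le _).2 ?_)
    (ker_expSum_le (by omega) hσ fun i h₁ h₂ => ?_)
  · rintro _ (rfl | rfl) <;> rw [SetLike.mem_coe, MonoidHom.mem_ker]
    · rw [map_mul, map_inv, map_pow, map_pow, expSum_α, expSum_σ le_rfl (by omega), ← pow_mul,
        mul_comm (n - 1), mul_inv_cancel]
    · simp
  · obtain ⟨s, hs⟩ := exists_zpow_conj_σ_one_eq_σ (by omega) hg h₁ h₂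
    rw [← hs]
    exact Subgroup.mul_inv_conj_zpow_mem hα (Subgroup.subset_closure (by simp)) s

theorem commutator_two_generators (n : ℕ) (hn : n = 5 ∨ 7 ≤ n) (k : ℕ)
    (hk1 : 2 ≤ k) (hk2 : k ≤ n - 2) (hg : Nat.gcd k n = 1) :
    Subgroup.closure ({(α n) ^ k * ((σ 1 : BraidGroup n) ^ (k * (n - 1)))⁻¹,
        σ 1 * (σ (1 + k))⁻¹} : Set (BraidGroup n)) = commutator (BraidGroup n) :=
  commutator_two_generators_general n k hk1 hk2 hg
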